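/- Let j, k : [a,b] → ℝ be C¹, strictly increasing, with j(a) = k(a), j(b) = k(b), j > k on (a,b), j'(a) > k'(a) > 0 and j'(b) < k'(b). Then there exist t₁, t₂ ∈ (a,b) such that j(t₁) = k(t₂) and j'(t₁) = k'(t₂) (i.e., the trajectories cross in the phase plane (h, h')). -/
import Mathlib

open Set

theorem stmt9 (a b : ℝ) (hab : a < b) (j k j' k' : ℝ → ℝ)
    (hj : ∀ τ ∈ Set.Icc a b, HasDerivWithinAt j (j' τ) (Set.Icc a b) τ)
    (hk : ∀ τ ∈ Set.Icc a b, HasDerivWithinAt k (k' τ) (Set.Icc a b) τ)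
    (hj' : ContinuousOn j' (Set.Icc a b))
    (hk' : ContinuousOn k' (Set.Icc a b))
    (hjm : StrictMonoOn j (Set.Icc a b))
    (hkm : StrictMonoOn k (Set.Icc a b))
    (ha : j a = k a) (hb : j b = k b)
    (hgt : ∀ τ ∈ Set.Ioo a b, k τ < j τ)
    (hka : 0 < k' a) (hja : k' a < j' a) (hjb : j' b < k' b) :
    ∃ t₁ ∈ Set.Ioo a b, ∃ t₂ ∈ Set.Ioo a b,
      j t₁ = k t₂ ∧ j' t₁ = k' t₂ := by
  have hIab : a ∈ Icc a b := ⟨le_refl a, hab.le⟩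
  have hIbb : b ∈ Icc a b := ⟨hab.le, le_refl b⟩
  have hjc : ContinuousOn j (Icc a b) := fun τ hτ => (hj τ hτ).continuousWithinAt
  have hkc : ContinuousOn k (Icc a b) := fun τ hτ => (hk τ hτ).continuousWithinAt
  -- bounds for j t
  have hjmem : ∀ t : Icc a b, j t ∈ Icc (k a) (k b) := by
    rintro ⟨t, ht⟩
    exact ⟨ha ▸ hjm.monotoneOn hIab ht ht.1, hb ▸ hjm.monotoneOn ht hIbb ht.2⟩
  have hkmem : ∀ t : Icc a b, k t ∈ Icc (k a) (k b) := by
    rintro ⟨t, ht⟩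
    exact ⟨hkm.monotoneOn hIab ht ht.1, hkm.monotoneOn ht hIbb ht.2⟩
  -- K : Icc a b → Icc (k a) (k b)
  set K : Icc a b → Icc (k a) (k b) := fun t => ⟨k t, hkmem t⟩ with hK
  have hKcont : Continuous K := by
    apply Continuous.subtype_mk
    exact hkc.restrict
  have hKinj : Function.Injective K := by
    rintro ⟨x, hx⟩ ⟨y, hy⟩ hxy
    have : k x = k y := congrArg Subtype.val hxy
    exact Subtype.ext (hkm.injOn hx hy this)
  have hKsurj : Function.Surjective K := by
    rintro ⟨v, hv⟩
    have hsub : Icc (k a) (k b) ⊆ k '' Icc a b :=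
      intermediate_value_Icc hab.le hkc
    obtain ⟨t, ht, hkt⟩ := hsub hv
    exact ⟨⟨t, ht⟩, Subtype.ext hkt⟩
  set e : Icc a b ≃ Icc (k a) (k b) := Equiv.ofBijective K ⟨hKinj, hKsurj⟩ with he
  have heK : ∀ v, K (e.symm v) = v := fun v => e.apply_symm_apply v
  have hecont : Continuous (e : Icc a b → Icc (k a) (k b)) := hKcont
  haveI : CompactSpace (Icc a b) := isCompact_iff_compactSpace.mp isCompact_Icc
  let homeo := Continuous.homeoOfEquivCompactToT2 (f := e) hecont
  have hsymm_cont : Continuous (e.symm : Icc (k a) (k b) → Icc a b) := homeo.symm.continuous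
  -- g : Icc a b → Icc a b
  set g : Icc a b → Icc a b := fun t => e.symm ⟨j t, hjmem t⟩ with hg
  have hkg : ∀ t, k (g t) = j t := by
    intro t
    have := heK ⟨j t, hjmem t⟩
    exact congrArg Subtype.val this
  have hgcont : Continuous g := by
    apply hsymm_cont.comp
    exact Continuous.subtype_mk hjc.restrict _
  -- G
  set G : Icc a b → ℝ := fun t => j' t - k' (g t) with hGdef
  have hGcont : Continuous G := by
    apply Continuous.sub
    · exact hj'.restrict
    · exact (hk'.restrict).comp hgcont
  set A : Icc a b := ⟨a, hIab⟩ with hA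
  set B : Icc a b := ⟨b, hIbb⟩ with hB
  have hgA : g A = A := by
    apply hKinj
    apply Subtype.ext
    show k (g A) = k a
    rw [hkg A]; exact ha
  have hgB : g B = B := by
    apply hKinj
    apply Subtype.ext
    show k (g B) = k b
    rw [hkg B]; exact hb
  have hGA : 0 < G A := by simp only [hGdef, hgA]; linarith
  have hGB : G B < 0 := by simp only [hGdef, hgB]; linarith
  haveI : PreconnectedSpace (Icc a b) :=
    Subtype.preconnectedSpace isPreconnected_Icc
  have hrange : Icc (G B) (G A) ⊆ Set.range G :=
    intermediate_value_univ B A hGcont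
  obtain ⟨t₀, ht₀⟩ := hrange ⟨hGB.le, hGA.le⟩
  -- t₀ is in the open interval
  have ht₀A : t₀ ≠ A := by
    intro h; rw [h] at ht₀; exact absurd ht₀.symm (ne_of_lt hGA)
  have ht₀B : t₀ ≠ B := by
    intro h; rw [h] at ht₀; exact absurd ht₀ (ne_of_lt hGB)
  have ht₀mem : (t₀ : ℝ) ∈ Ioo a b := by
    rcases t₀.2 with ⟨h1, h2⟩
    refine ⟨lt_of_le_of_ne h1 ?_, lt_of_le_of_ne h2 ?_⟩
    · intro h; exact ht₀A (Subtype.ext h.symm)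
    · intro h; exact ht₀B (Subtype.ext h)
  -- t₂ = g t₀ is in the open interval
  have hkj : k (g t₀) = j t₀ := hkg t₀
  have hklt : k t₀ < k (g t₀) := by
    rw [hkj]; exact hgt _ ht₀mem
  have ht₀lt : (t₀ : ℝ) < (g t₀ : ℝ) := by
    by_contra h
    push_neg at h
    exact absurd (hkm.monotoneOn (g t₀).2 t₀.2 h) (not_le.mpr hklt)
  have hjlt : j (t₀ : ℝ) < j b := hjm ⟨ht₀mem.1.le, ht₀mem.2.le⟩ hIbb ht₀mem.2
  have hgt₀lt : (g t₀ : ℝ) < b := by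
    by_contra h
    push_neg at h
    have hgb : (g t₀ : ℝ) = b := le_antisymm (g t₀).2.2 h
    have : k (g t₀ : ℝ) = k b := by rw [hgb]
    rw [hkj, ← hb] at this
    exact absurd this (ne_of_lt hjlt)
  have hG0 : j' (t₀ : ℝ) = k' (g t₀ : ℝ) := by
    have : j' (t₀ : ℝ) - k' (g t₀ : ℝ) = 0 := ht₀
    linarith
  exact ⟨(t₀ : ℝ), ht₀mem, (g t₀ : ℝ), ⟨lt_trans ht₀mem.1 ht₀lt, hgt₀lt⟩, hkj.symm, hG0⟩
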